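/- arXiv:1807.06516 — 2 statements merged into one kernel-verified Lean document; each statement's English description precedes it below -/
import Mathlib

section
/- Let M be a matroid on a finite linearly ordered ground set E and let B be a basis of M. There exists a unique subset F of E such that: (i) B ∩ F is a basis of M(F) and B \ F is a basis of M/F; (ii) Int_{M(F)}(B ∩ F) = ∅; (iii) Ext_{M(F)}(B ∩ F) = Ext_M(B); (iv) Int_{M/F}(B \ F) = Int_M(B); (v) Ext_{M/F}(B \ F) = ∅. Moreover, this unique subset F is a cyclic flat of M. -/
/-!
Write `C(e)` and `C*(b)` for the fundamental circuit and cocircuit of `B`. When `B ∩ F` is a basis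
of `F`, the fundamental circuits and cocircuits of `B ∩ F` in `M(F)` are `C(e)` and `C*(b) ∩ F`, and
those of `B \ F` in `M/F` are `C(e) \ F` and `C*(b)`. In these terms the five conditions say that
`F` is a fixed point of a monotone map on sets: `x ∈ B` lies in `F` iff some smaller element of
`C*(x)` does, and `x ∉ B` lies in `F` iff all smaller elements of `C(x)` do. A fixed point exists
by Knaster–Tarski, and it is unique since membership of `x` is decided by the smaller elements.
A fixed point is the closure of `B ∩ F`, hence a flat, and each of its elements lies on a
fundamental circuit contained in it, hence it is a union of circuits.
-/

open Matroid Set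

namespace ActiveBij

variable {α : Type*}

/-- Deletion of a set of elements from a matroid. -/
def del (M : Matroid α) (D : Set α) : Matroid α := M ↾ (M.E \ D)

/-- Contraction of a set of elements of a matroid. -/
def con (M : Matroid α) (C : Set α) : Matroid α := (del M✶ C)✶

/-- The minor `M(G)/F` : restriction to `G` followed by contraction of `F`. -/
def minor (M : Matroid α) (G F : Set α) : Matroid α := con (M ↾ G) F

/-- A circuit of a matroid : a minimal dependent set. -/
def Cct (M : Matroid α) (C : Set α) : Prop := Minimal M.Dep C

/-- A cocircuit of a matroid : a circuit of the dual. -/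
def Cocct (M : Matroid α) (C : Set α) : Prop := Cct M✶ C

/-- The fundamental circuit of `e ∉ B` with respect to a base `B` :
the unique circuit contained in `B ∪ {e}`. -/
def fundCct (M : Matroid α) (B : Set α) (e : α) : Set α :=
  ⋂₀ {C | Cct M C ∧ C ⊆ insert e B}

/-- The fundamental cocircuit of `b ∈ B` with respect to a base `B` :
the unique cocircuit contained in `(E \ B) ∪ {b}`. -/
def fundCocct (M : Matroid α) (B : Set α) (b : α) : Set α :=
  ⋂₀ {C | Cocct M C ∧ C ⊆ insert b (M.E \ B)}

/-- The set of internally active elements of a base `B` :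
elements `b ∈ B` that are the minimum of their fundamental cocircuit. -/
def ActInt [LinearOrder α] (M : Matroid α) (B : Set α) : Set α :=
  {b ∈ B | IsLeast (fundCocct M B b) b}

/-- The set of externally active elements of a base `B` :
elements `e ∈ M.E \ B` that are the minimum of their fundamental circuit. -/
def ActExt [LinearOrder α] (M : Matroid α) (B : Set α) : Set α :=
  {e ∈ M.E \ B | IsLeast (fundCct M B e) e}

/-- A uniactive internal base : internal activity `1` and external activity `0`. -/
def UIntBase [LinearOrder α] (M : Matroid α) (B : Set α) : Prop :=
  M.IsBase B ∧ (ActInt M B).ncard = 1 ∧ (ActExt M B).ncard = 0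

/-- A uniactive external base : internal activity `0` and external activity `1`. -/
def UExtBase [LinearOrder α] (M : Matroid α) (B : Set α) : Prop :=
  M.IsBase B ∧ (ActInt M B).ncard = 0 ∧ (ActExt M B).ncard = 1

/-- `β(M)` : the number of uniactive internal bases. -/
noncomputable def beta [LinearOrder α] (M : Matroid α) : ℕ :=
  {B : Set α | UIntBase M B}.ncard

/-- `β*(M)` : the number of uniactive external bases. -/
noncomputable def betaStar [LinearOrder α] (M : Matroid α) : ℕ :=
  {B : Set α | UExtBase M B}.ncard

/-- A connected matroid : any two elements of the ground set lie on a common circuit. -/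
def Conn (M : Matroid α) : Prop :=
  M.E.Nonempty ∧ ∀ ⦃x y⦄, x ∈ M.E → y ∈ M.E →
    (x = y ∨ ∃ C, Cct M C ∧ x ∈ C ∧ y ∈ C)

/-- A matroid consisting of a single loop. -/
def IsLoopMatroid (M : Matroid α) : Prop := ∃ e, M.E = {e} ∧ M.Dep {e}

/-- A matroid consisting of a single coloop (isthmus). -/
def IsColoopMatroid (M : Matroid α) : Prop := ∃ e, M.E = {e} ∧ M.Indep {e}

/-- A flat : a subset of the ground set whose complement is a union of cocircuits. -/
def IsFlat (M : Matroid α) (F : Set α) : Prop :=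
  F ⊆ M.E ∧ ∃ S : Set (Set α), (∀ C ∈ S, Cocct M C) ∧ M.E \ F = ⋃₀ S

/-- A dual-flat : a union of circuits. -/
def IsDualFlat (M : Matroid α) (F : Set α) : Prop :=
  ∃ S : Set (Set α), (∀ C ∈ S, Cct M C) ∧ F = ⋃₀ S

/-- A cyclic flat : both a flat and a dual-flat. -/
def IsCyclicFlat (M : Matroid α) (F : Set α) : Prop :=
  IsFlat M F ∧ IsDualFlat M F

/-- The data of a filtration : `∅ = F'_ε ⊂ ⋯ ⊂ F'_0 = F_c = F_0 ⊂ ⋯ ⊂ F_ι = E`. -/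
structure Filtration (α : Type*) where
  ι : ℕ
  ε : ℕ
  F : Fin (ι + 1) → Set α
  F' : Fin (ε + 1) → Set α

/-- The `k`-th internal minor `M(F_k)/F_{k-1}` induced by a filtration. -/
def intMinor (M : Matroid α) (f : Filtration α) (k : Fin f.ι) : Matroid α :=
  minor M (f.F k.succ) (f.F k.castSucc)

/-- The `k`-th external minor `M(F'_{k-1})/F'_k` induced by a filtration. -/
def extMinor (M : Matroid α) (f : Filtration α) (k : Fin f.ε) : Matroid α :=
  minor M (f.F' k.castSucc) (f.F' k.succ)

/-- The filtration property : strictly nested subsets from `∅` to `M.E` through `F_c`,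
with the minima of the successive differences increasing on each side of `F_c`. -/
def IsFiltration [LinearOrder α] (M : Matroid α) (f : Filtration α) : Prop :=
  f.F' (Fin.last f.ε) = ∅ ∧
  f.F' 0 = f.F 0 ∧
  f.F (Fin.last f.ι) = M.E ∧
  (∀ k : Fin f.ι, f.F k.castSucc ⊂ f.F k.succ) ∧
  (∀ k : Fin f.ε, f.F' k.succ ⊂ f.F' k.castSucc) ∧
  (∀ j k : Fin f.ι, j < k → ∀ a b : α,
    IsLeast (f.F j.succ \ f.F j.castSucc) a →
    IsLeast (f.F k.succ \ f.F k.castSucc) b → a < b) ∧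
  (∀ j k : Fin f.ε, j < k → ∀ a b : α,
    IsLeast (f.F' j.castSucc \ f.F' j.succ) a →
    IsLeast (f.F' k.castSucc \ f.F' k.succ) b → a < b)

/-- A connected filtration : a filtration all of whose induced internal minors are
connected and not single loops, and all of whose induced external minors are connected
and not single coloops. -/
def IsConnFiltration [LinearOrder α] (M : Matroid α) (f : Filtration α) : Prop :=
  IsFiltration M f ∧
  (∀ k : Fin f.ι, Conn (intMinor M f k) ∧ ¬ IsLoopMatroid (intMinor M f k)) ∧
  (∀ k : Fin f.ε, Conn (extMinor M f k) ∧ ¬ IsColoopMatroid (extMinor M f k))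

/-- An active filtration of a base `B` : a filtration such that `B` induces a uniactive
internal base of each internal minor and a uniactive external base of each external minor. -/
def IsActiveFiltration [LinearOrder α] (M : Matroid α) (B : Set α) (f : Filtration α) : Prop :=
  IsFiltration M f ∧
  (∀ k : Fin f.ι, UIntBase (intMinor M f k) (B ∩ (f.F k.succ \ f.F k.castSucc))) ∧
  (∀ k : Fin f.ε, UExtBase (extMinor M f k) (B ∩ (f.F' k.castSucc \ f.F' k.succ)))

/-- The subset `F(X)` attached to a base `B` and a set `X` of internally active elements :
`B ∩ F` is a base of `M(F)`, the activities of the induced bases of `M(F)` and `M/F`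
split those of `B`, with `Int` of the contraction part equal to `X`. -/
def DecompSet [LinearOrder α] (M : Matroid α) (B X F : Set α) : Prop :=
  F ⊆ M.E ∧
  (M ↾ F).IsBase (B ∩ F) ∧
  ActInt (M ↾ F) (B ∩ F) = ActInt M B \ X ∧
  ActExt (M ↾ F) (B ∩ F) = ActExt M B ∧
  ActInt (con M F) (B \ F) = X ∧
  ActExt (con M F) (B \ F) = ∅

/-- The dual of a filtration : complement every subset and exchange the two sides. -/
def dualFil (M : Matroid α) (f : Filtration α) : Filtration α :=
  ⟨f.ε, f.ι, fun k => M.E \ f.F' k, fun k => M.E \ f.F k⟩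

/-- The set of subsets occurring in a filtration. -/
def termsOf (f : Filtration α) : Set (Set α) :=
  {H | ∃ k, f.F k = H} ∪ {H | ∃ k, f.F' k = H}

end ActiveBij
open Function

namespace Matroid

variable {α : Type*} {M : Matroid α} {B D I J R X : Set α} {b e x : α}

lemma Indep.fundCircuit_subset_of_dep (hI : M.Indep I) (hD : M.Dep D) (hDI : D ⊆ insert e I) :
    M.fundCircuit e I ⊆ D := by
  obtain ⟨C, hCD, hC⟩ := hD.exists_isCircuit_subset
  rwa [← hC.eq_fundCircuit_of_subset hI (hCD.trans hDI)]

lemma Indep.fundCircuit_eq_of_subset (hJ : M.Indep J) (hIJ : I ⊆ J) (he : e ∈ M.closure I)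
    (heJ : e ∉ J) : M.fundCircuit e J = M.fundCircuit e I :=
  (((hJ.subset hIJ).fundCircuit_isCircuit he (notMem_subset hIJ heJ)).eq_fundCircuit_of_subset hJ
    ((M.fundCircuit_subset_insert e I).trans (insert_subset_insert hIJ))).symm

lemma Indep.fundCircuit_contract (hB : M.Indep B) (hBX : M.IsBasis (B ∩ X) X)
    (he : e ∈ M.closure B) (heB : e ∉ B) (heX : e ∉ X) :
    (M ／ X).fundCircuit e (B \ X) = M.fundCircuit e B \ X := by
  have hind : (M ／ X).Indep (B \ X) := by
    rw [hBX.contract_indep_iff, sdiff_union_inter]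
    exact ⟨hB, disjoint_sdiff_right⟩
  have hecl : e ∈ (M ／ X).closure (B \ X) := by
    rw [contract_closure_eq, sdiff_union_self]
    exact ⟨M.closure_subset_closure subset_union_left he, heX⟩
  have hC := hB.fundCircuit_isCircuit he heB
  have hCX : M.fundCircuit e B ⊆ (M.fundCircuit e B \ X) ∪ (B ∩ X) := fun y hy ↦ by
    by_cases hyX : y ∈ X
    · refine .inr ⟨?_, hyX⟩
      obtain rfl | hyB := M.fundCircuit_subset_insert e B hy
      exacts [absurd hyX heX, hyB]
    · exact .inl ⟨hy, hyX⟩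
  refine subset_antisymm (hind.fundCircuit_subset_of_dep ?_ ?_) ?_
  · rw [hBX.contract_dep_iff]
    refine ⟨hC.dep.superset hCX ?_, disjoint_sdiff_right⟩
    exact union_subset (sdiff_subset.trans hC.subset_ground) hBX.indep.subset_ground
  · intro y hy
    obtain rfl | hyB := M.fundCircuit_subset_insert e B hy.1
    exacts [mem_insert _ _, .inr ⟨hyB, hy.2⟩]
  · have hD := (hind.fundCircuit_isCircuit hecl fun h ↦ heB h.1).dep
    rw [hBX.contract_dep_iff] at hD
    have hsub := hB.fundCircuit_subset_of_dep hD.1 <| union_subset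
      ((fundCircuit_subset_insert ..).trans (insert_subset_insert sdiff_subset))
      (inter_subset_left.trans (subset_insert _ _))
    rintro y ⟨hyC, hyX⟩
    exact (hsub hyC).resolve_right fun h ↦ hyX h.2

lemma IsBase.fundCocircuit_restrict (hB : M.IsBase B) (hBR : M.IsBasis (B ∩ R) R)
    (hb : b ∈ B ∩ R) : (M ↾ R).fundCocircuit b (B ∩ R) = M.fundCocircuit b B ∩ R := by
  have hR : R ⊆ M.E := hBR.subset_ground
  have hdual : (M ↾ R)✶ = M✶ ／ (M.E \ R) := by
    rw [← dual_delete, delete_eq_restrict, sdiff_sdiff_cancel_left hR]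
  have hcompl : R \ (B ∩ R) = (M.E \ B) \ (M.E \ R) := by
    ext x; have := @hR x; simp only [mem_sdiff, mem_inter_iff]; tauto
  have h := hB.compl_isBase_dual.indep.fundCircuit_contract
    (hB.compl_inter_isBasis_of_inter_isBasis hBR)
    (by rw [hB.compl_isBase_dual.closure_eq]; exact hB.subset_ground hb.1)
    (fun h ↦ h.2 hb.1) (fun h ↦ h.2 hb.2)
  rw [fundCocircuit, fundCocircuit, hdual, contract_ground, dual_ground, sdiff_sdiff_cancel_left hR,
    hcompl, h]
  have hK : M✶.fundCircuit b (M.E \ B) ⊆ M.E :=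
    fundCircuit_subset_ground (M := M✶) (hB.subset_ground hb.1) sdiff_subset
  ext x; have := @hK x; simp only [mem_sdiff, mem_inter_iff]; tauto

lemma IsBase.fundCocircuit_contract (hB : M.IsBase B) (hBX : M.IsBasis (B ∩ X) X)
    (hb : b ∈ B \ X) : (M ／ X).fundCocircuit b (B \ X) = M.fundCocircuit b B := by
  have hbE : b ∈ M.E \ X := ⟨hB.subset_ground hb.1, hb.2⟩
  have hcompl : (M.E \ X) \ (B \ X) = (M.E \ B) ∩ (M.E \ X) := by
    ext x; simp only [mem_sdiff, mem_inter_iff]; tauto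
  rw [fundCocircuit, fundCocircuit, dual_contract, delete_eq_restrict, restrict_ground_eq,
    dual_ground, hcompl, fundCircuit_restrict (M := M✶) inter_subset_right hbE sdiff_subset,
    hB.compl_isBase_dual.indep.fundCircuit_eq_of_subset inter_subset_left
      ((hB.compl_inter_isBasis_of_inter_isBasis hBX).subset_closure hbE) (fun h ↦ h.2 hb.1)]

lemma IsBase.contract_isBase (hB : M.IsBase B) (hBX : M.IsBasis (B ∩ X) X) :
    (M ／ X).IsBase (B \ X) := by
  rw [← isBasis_ground_iff, contract_ground]
  exact hB.isBasis_ground.contract_isBasis hBX (by rw [sdiff_union_inter]; exact hB.indep)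

lemma Indep.exists_isCocircuit_disjoint_closure (hI : M.Indep I) (hx : x ∈ M.E \ M.closure I) :
    ∃ K, M.IsCocircuit K ∧ x ∈ K ∧ Disjoint K (M.closure I) := by
  have hxI : x ∉ I := notMem_subset (M.subset_closure I hI.subset_ground) hx.2
  obtain ⟨B', hB', hIB'⟩ := ((hI.insert_indep_iff_of_notMem hxI).2 hx).exists_isBase_superset
  refine ⟨M.fundCocircuit x B', fundCocircuit_isCocircuit (hIB' (mem_insert x I)) hB',
    mem_fundCocircuit .., disjoint_left.2 fun z hzK hzcl ↦ ?_⟩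
  by_cases hzB' : z ∈ B'
  · have hzx : z = x := by
      simpa using (M.fundCocircuit_inter_eq (hIB' (mem_insert x I))).subset ⟨hzK, hzB'⟩
    exact hx.2 (hzx ▸ hzcl)
  have hxC := hB'.mem_fundCocircuit_iff_mem_fundCircuit.1 hzK
  rw [hB'.indep.fundCircuit_eq_of_subset ((subset_insert x I).trans hIB') hzcl hzB'] at hxC
  obtain rfl | hxI' := M.fundCircuit_subset_insert z I hxC
  exacts [hx.2 hzcl, hxI hxI']

end Matroid

theorem Function.IsFixedPt.eq_of_finite_of_mem_congr {α : Type*} [LinearOrder α]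
    {T : Set α → Set α} {S : Set α} (hS : S.Finite) (hTS : ∀ F, T F ⊆ S)
    (hT : ∀ F G x, (∀ y < x, y ∈ F ↔ y ∈ G) → (x ∈ T F ↔ x ∈ T G)) {F G : Set α}
    (hF : IsFixedPt T F) (hG : IsFixedPt T G) : F = G := by
  by_contra hne
  have hD : {x | ¬(x ∈ F ↔ x ∈ G)}.Nonempty := by
    by_contra h
    exact hne (Set.ext fun x ↦ not_not.1 fun hx ↦ h ⟨x, hx⟩)
  have hDS : {x | ¬(x ∈ F ↔ x ∈ G)} ⊆ S := fun x hx ↦ by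
    rw [mem_ofPred_eq, ← hF.eq, ← hG.eq] at hx
    by_cases hxF : x ∈ T F
    exacts [hTS F hxF, hTS G (by tauto)]
  obtain ⟨x, hx, hmin⟩ := Set.exists_min_image _ id (hS.subset hDS) hD
  refine hx ?_
  rw [← hF.eq, ← hG.eq]
  exact hT F G x fun y hyx ↦ not_not.1 fun hy ↦ (hmin y hy).not_gt hyx

namespace ActiveBij

variable {α : Type*} {M : Matroid α} {B C F I : Set α} {b e x : α}

lemma con_eq_contract (M : Matroid α) (X : Set α) : con M X = M ／ X := rfl

lemma cct_iff_isCircuit : Cct M C ↔ M.IsCircuit C := Iff.rfl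

lemma fundCct_eq_fundCircuit (hI : M.Indep I) (he : e ∈ M.closure I) (heI : e ∉ I) :
    fundCct M I e = M.fundCircuit e I := by
  have h : {C | Cct M C ∧ C ⊆ insert e I} = {M.fundCircuit e I} :=
    Set.ext fun C ↦ ⟨fun hC ↦ (cct_iff_isCircuit.1 hC.1).eq_fundCircuit_of_subset hI hC.2, by
      rintro rfl; exact ⟨hI.fundCircuit_isCircuit he heI, M.fundCircuit_subset_insert e I⟩⟩
  rw [fundCct, h, sInter_singleton]

lemma _root_.Matroid.IsBase.fundCct_eq (hB : M.IsBase B) (he : e ∈ M.E \ B) :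
    fundCct M B e = M.fundCircuit e B :=
  fundCct_eq_fundCircuit hB.indep (by rw [hB.closure_eq]; exact he.1) he.2

lemma _root_.Matroid.IsBase.fundCocct_eq (hB : M.IsBase B) (hb : b ∈ B) :
    fundCocct M B b = M.fundCocircuit b B :=
  hB.compl_isBase_dual.fundCct_eq ⟨hB.subset_ground hb, fun h ↦ h.2 hb⟩

lemma isFlat_closure (M : Matroid α) (X : Set α) : IsFlat M (M.closure X) := by
  obtain ⟨I, hI⟩ := M.exists_isBasis' X
  rw [← hI.closure_eq_closure]
  refine ⟨M.closure_subset_ground I, {K | M.IsCocircuit K ∧ Disjoint K (M.closure I)},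
    fun K hK ↦ hK.1, subset_antisymm (fun x hx ↦ ?_) ?_⟩
  · obtain ⟨K, hK, hxK, hKI⟩ := hI.indep.exists_isCocircuit_disjoint_closure hx
    exact ⟨K, ⟨hK, hKI⟩, hxK⟩
  · rintro x ⟨K, hK, hxK⟩
    exact ⟨hK.1.subset_ground hxK, disjoint_left.1 hK.2 hxK⟩

lemma isDualFlat_of_forall_exists_isCircuit (h : ∀ x ∈ F, ∃ C, M.IsCircuit C ∧ x ∈ C ∧ C ⊆ F) :
    IsDualFlat M F := by
  refine ⟨{C | M.IsCircuit C ∧ C ⊆ F}, fun C hC ↦ hC.1, subset_antisymm (fun x hx ↦ ?_) ?_⟩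
  · obtain ⟨C, hC, hxC, hCF⟩ := h x hx
    exact ⟨C, ⟨hC, hCF⟩, hxC⟩
  · rintro x ⟨C, hC, hxC⟩
    exact hC.2 hxC

variable [LinearOrder α]

lemma _root_.Matroid.IsBase.actInt_eq (hB : M.IsBase B) :
    ActInt M B = {b ∈ B | IsLeast (M.fundCocircuit b B) b} :=
  Set.ext fun _ ↦ and_congr_right fun hb ↦ by rw [hB.fundCocct_eq hb]

lemma _root_.Matroid.IsBase.actExt_eq (hB : M.IsBase B) :
    ActExt M B = {e ∈ M.E \ B | IsLeast (M.fundCircuit e B) e} :=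
  Set.ext fun _ ↦ and_congr_right fun he ↦ by rw [hB.fundCct_eq he]

lemma actInt_restrict (hB : M.IsBase B) (hBF : M.IsBasis (B ∩ F) F) :
    ActInt (M ↾ F) (B ∩ F) = {b ∈ B ∩ F | IsLeast (M.fundCocircuit b B ∩ F) b} :=
  Set.ext fun _ ↦ and_congr_right fun hb ↦ by
    rw [hBF.isBase_restrict.fundCocct_eq hb, hB.fundCocircuit_restrict hBF hb]

lemma actExt_restrict (hB : M.IsBase B) (hBF : M.IsBasis (B ∩ F) F) :
    ActExt (M ↾ F) (B ∩ F) = {e ∈ F \ B | IsLeast (M.fundCircuit e B) e} := by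
  have hground : (M ↾ F).E \ (B ∩ F) = F \ B := sdiff_inter_self_eq_sdiff
  rw [hBF.isBase_restrict.actExt_eq, hground]
  refine Set.ext fun e ↦ and_congr_right fun he ↦ ?_
  rw [fundCircuit_restrict inter_subset_right he.1 hBF.subset_ground,
    hB.indep.fundCircuit_eq_of_subset inter_subset_left (hBF.subset_closure he.1) he.2]

lemma actInt_contract (hB : M.IsBase B) (hBF : M.IsBasis (B ∩ F) F) :
    ActInt (con M F) (B \ F) = {b ∈ B \ F | IsLeast (M.fundCocircuit b B) b} := by
  rw [con_eq_contract, (hB.contract_isBase hBF).actInt_eq]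
  exact Set.ext fun _ ↦ and_congr_right fun hb ↦ by rw [hB.fundCocircuit_contract hBF hb]

lemma actExt_contract (hB : M.IsBase B) (hBF : M.IsBasis (B ∩ F) F) :
    ActExt (con M F) (B \ F) = {e ∈ (M.E \ F) \ B | IsLeast (M.fundCircuit e B \ F) e} := by
  have hground : (M ／ F).E \ (B \ F) = (M.E \ F) \ B := by
    ext x; simp only [contract_ground, mem_sdiff]; tauto
  rw [con_eq_contract, (hB.contract_isBase hBF).actExt_eq, hground]
  refine Set.ext fun e ↦ and_congr_right fun he ↦ ?_
  rw [hB.indep.fundCircuit_contract hBF (by rw [hB.closure_eq]; exact he.1.1) he.2 he.1.2]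

def decompStep (M : Matroid α) (B : Set α) : Set α →o Set α where
  toFun F := {x ∈ M.E | (x ∈ B → ∃ y ∈ M.fundCocircuit x B, y < x ∧ y ∈ F) ∧
    (x ∉ B → ∀ y ∈ M.fundCircuit x B, y < x → y ∈ F)}
  monotone' _ _ hFG _ hx := ⟨hx.1, fun hxB ↦ (hx.2.1 hxB).imp fun _ hy ↦ ⟨hy.1, hy.2.1, hFG hy.2.2⟩,
    fun hxB y hy hyx ↦ hFG (hx.2.2 hxB y hy hyx)⟩

lemma mem_decompStep : x ∈ decompStep M B F ↔ x ∈ M.E ∧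
    (x ∈ B → ∃ y ∈ M.fundCocircuit x B, y < x ∧ y ∈ F) ∧
    (x ∉ B → ∀ y ∈ M.fundCircuit x B, y < x → y ∈ F) := Iff.rfl

lemma mem_decompStep_congr {G : Set α} (h : ∀ y < x, y ∈ F ↔ y ∈ G) :
    x ∈ decompStep M B F ↔ x ∈ decompStep M B G := by
  rw [mem_decompStep, mem_decompStep]
  exact and_congr_right' <| and_congr
    (imp_congr_right fun _ ↦ exists_congr fun y ↦ and_congr_right fun _ ↦ and_congr_right (h y))
    (imp_congr_right fun _ ↦ forall₂_congr fun y _ ↦ imp_congr_right (h y))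

lemma isFixedPt_decompStep_unique [M.Finite] {G : Set α} (hF : IsFixedPt (decompStep M B) F)
    (hG : IsFixedPt (decompStep M B) G) : F = G :=
  hF.eq_of_finite_of_mem_congr M.ground_finite (fun _ _ hx ↦ hx.1)
    (fun _ _ _ h ↦ mem_decompStep_congr h) hG

lemma subset_ground_of_isFixedPt (hF : IsFixedPt (decompStep M B) F) : F ⊆ M.E :=
  hF.eq ▸ fun _ hx ↦ hx.1

lemma fundCircuit_subset_of_isFixedPt (hB : M.IsBase B) (hF : IsFixedPt (decompStep M B) F)
    (hx : x ∈ F \ B) : M.fundCircuit x B ⊆ F := by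
  intro y hy
  obtain rfl | hyB := M.fundCircuit_subset_insert x B hy
  · exact hx.1
  obtain hyx | hxy := lt_or_gt_of_ne (show y ≠ x by rintro rfl; exact hx.2 hyB)
  · exact (hF.eq.symm.subset hx.1).2.2 hx.2 y hy hyx
  · exact hF.eq.subset ⟨hB.subset_ground hyB, fun _ ↦
      ⟨x, hB.mem_fundCocircuit_iff_mem_fundCircuit.2 hy, hxy, hx.1⟩, fun h ↦ absurd hyB h⟩

lemma isBasis_of_isFixedPt (hB : M.IsBase B) (hF : IsFixedPt (decompStep M B) F) :
    M.IsBasis (B ∩ F) F := by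
  refine (hB.indep.subset inter_subset_left).isBasis_of_subset_of_subset_closure
    inter_subset_right fun x hx ↦ ?_
  by_cases hxB : x ∈ B
  · exact M.subset_closure _ (inter_subset_left.trans hB.subset_ground) ⟨hxB, hx⟩
  have hC := hB.fundCircuit_isCircuit (subset_ground_of_isFixedPt hF hx) hxB
  refine M.closure_subset_closure ?_ (hC.mem_closure_sdiff_singleton_of_mem (M.mem_fundCircuit x B))
  rintro y ⟨hyC, hyx⟩
  exact ⟨(M.fundCircuit_subset_insert x B hyC).resolve_left hyx,
    fundCircuit_subset_of_isFixedPt hB hF ⟨hx, hxB⟩ hyC⟩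

lemma closure_inter_eq_of_isFixedPt (hB : M.IsBase B) (hF : IsFixedPt (decompStep M B) F) :
    M.closure (B ∩ F) = F := by
  refine subset_antisymm (fun x hx ↦ ?_) (isBasis_of_isFixedPt hB hF).subset_closure
  by_cases hxB : x ∈ B
  · exact ((hB.indep.closure_inter_eq_self_of_subset inter_subset_left).subset ⟨hx, hxB⟩).2
  refine hF.eq.subset ⟨mem_ground_of_mem_closure hx, fun h ↦ absurd h hxB, fun _ y hy hyx ↦ ?_⟩
  rw [hB.indep.fundCircuit_eq_of_subset inter_subset_left hx hxB] at hy
  exact ((M.fundCircuit_subset_insert x _ hy).resolve_left hyx.ne).2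

lemma exists_isCircuit_of_isFixedPt (hB : M.IsBase B) (hF : IsFixedPt (decompStep M B) F)
    (hx : x ∈ F) : ∃ C, M.IsCircuit C ∧ x ∈ C ∧ C ⊆ F := by
  by_cases hxB : x ∈ B
  · obtain ⟨y, hyK, hyx, hyF⟩ := (hF.eq.symm.subset hx).2.1 hxB
    have hyB : y ∉ B := ((M.fundCocircuit_subset_insert_compl x B hyK).resolve_left hyx.ne).2
    exact ⟨_, hB.fundCircuit_isCircuit (subset_ground_of_isFixedPt hF hyF) hyB,
      hB.mem_fundCocircuit_iff_mem_fundCircuit.1 hyK,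
      fundCircuit_subset_of_isFixedPt hB hF ⟨hyF, hyB⟩⟩
  · exact ⟨_, hB.fundCircuit_isCircuit (subset_ground_of_isFixedPt hF hx) hxB,
      M.mem_fundCircuit x B, fundCircuit_subset_of_isFixedPt hB hF ⟨hx, hxB⟩⟩

lemma isCyclicFlat_of_isFixedPt (hB : M.IsBase B) (hF : IsFixedPt (decompStep M B) F) :
    IsCyclicFlat M F :=
  ⟨closure_inter_eq_of_isFixedPt hB hF ▸ isFlat_closure M (B ∩ F),
    isDualFlat_of_forall_exists_isCircuit fun _ ↦ exists_isCircuit_of_isFixedPt hB hF⟩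

lemma decompSet_of_isFixedPt (hB : M.IsBase B) (hF : IsFixedPt (decompStep M B) F) :
    DecompSet M B (ActInt M B) F := by
  have hBF := isBasis_of_isFixedPt hB hF
  refine ⟨subset_ground_of_isFixedPt hF, hBF.isBase_restrict, ?_, ?_, ?_, ?_⟩
  · rw [actInt_restrict hB hBF, sdiff_self, eq_empty_iff_forall_notMem]
    rintro b ⟨hb, hleast⟩
    obtain ⟨y, hyK, hyb, hyF⟩ := (hF.eq.symm.subset hb.2).2.1 hb.1
    exact (hleast.2 ⟨hyK, hyF⟩).not_gt hyb
  · rw [actExt_restrict hB hBF, hB.actExt_eq]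
    refine Set.ext fun e ↦ ⟨fun ⟨he, hleast⟩ ↦ ⟨⟨hBF.subset_ground he.1, he.2⟩, hleast⟩,
      fun ⟨he, hleast⟩ ↦ ⟨⟨hF.eq.subset ⟨he.1, fun h ↦ absurd h he.2, fun _ y hy hye ↦ ?_⟩, he.2⟩,
        hleast⟩⟩
    exact absurd (hleast.2 hy) hye.not_ge
  · rw [actInt_contract hB hBF, hB.actInt_eq]
    refine Set.ext fun b ↦ ⟨fun ⟨hb, hleast⟩ ↦ ⟨hb.1, hleast⟩,
      fun ⟨hb, hleast⟩ ↦ ⟨⟨hb, fun hbF ↦ ?_⟩, hleast⟩⟩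
    obtain ⟨y, hyK, hyb, -⟩ := (hF.eq.symm.subset hbF).2.1 hb
    exact (hleast.2 hyK).not_gt hyb
  · rw [actExt_contract hB hBF, eq_empty_iff_forall_notMem]
    rintro e ⟨⟨⟨heE, heF⟩, heB⟩, hleast⟩
    have hsmall : ¬ ∀ y ∈ M.fundCircuit e B, y < e → y ∈ F :=
      fun h ↦ heF (hF.eq.subset ⟨heE, fun h' ↦ absurd h' heB, fun _ ↦ h⟩)
    push Not at hsmall
    obtain ⟨y, hyC, hye, hyF⟩ := hsmall
    exact (hleast.2 ⟨hyC, hyF⟩).not_gt hye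

lemma DecompSet.isFixedPt (hB : M.IsBase B) (hD : DecompSet M B (ActInt M B) F) :
    IsFixedPt (decompStep M B) F := by
  obtain ⟨hFE, hbase, hint, -, -, hext⟩ := hD
  have hBF : M.IsBasis (B ∩ F) F := (isBase_restrict_iff hFE).1 hbase
  rw [actInt_restrict hB hBF, sdiff_self, eq_empty_iff_forall_notMem] at hint
  rw [actExt_contract hB hBF, eq_empty_iff_forall_notMem] at hext
  have hCF : ∀ y ∈ F \ B, M.fundCircuit y B ⊆ F := fun y hy ↦ by
    rw [hB.indep.fundCircuit_eq_of_subset inter_subset_left (hBF.subset_closure hy.1) hy.2]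
    exact (M.fundCircuit_subset_insert y _).trans (insert_subset hy.1 inter_subset_right)
  refine subset_antisymm (fun x hx ↦ ?_)
    (fun x hx ↦ ⟨hFE hx, fun hxB ↦ ?_, fun hxB y hy _ ↦ hCF x ⟨hx, hxB⟩ hy⟩)
  · obtain ⟨hxE, hxB₁, hxB₂⟩ := mem_decompStep.1 hx
    by_cases hxB : x ∈ B
    · obtain ⟨y, hyK, hyx, hyF⟩ := hxB₁ hxB
      have hyB : y ∉ B := ((M.fundCocircuit_subset_insert_compl x B hyK).resolve_left hyx.ne).2
      exact hCF y ⟨hyF, hyB⟩ (hB.mem_fundCocircuit_iff_mem_fundCircuit.1 hyK)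
    · by_contra hxF
      exact hext x ⟨⟨⟨hxE, hxF⟩, hxB⟩, ⟨M.mem_fundCircuit x B, hxF⟩,
        fun y hy ↦ not_lt.1 fun hyx ↦ hy.2 (hxB₂ hxB y hy.1 hyx)⟩
  · by_contra h
    push Not at h
    exact hint x ⟨⟨hxB, hx⟩, ⟨M.mem_fundCocircuit x B, hx⟩,
      fun y hy ↦ not_lt.1 fun hyx ↦ h y hy.1 hyx hy.2⟩

end ActiveBij

namespace ActiveBij

/-- The external part of a base : unique subset `F` with `B ∩ F` an internal-activity-`0`
base of `M(F)` keeping all external activity, and `B \ F` keeping all internal activity in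
`M/F` with no external activity; moreover this subset is a cyclic flat. -/
theorem stmt4 {α : Type*} [LinearOrder α] (M : Matroid α) [M.Finite]
    (B : Set α) (hB : M.IsBase B) :
    ∃ F : Set α, DecompSet M B (ActInt M B) F ∧ IsCyclicFlat M F ∧
      ∀ F' : Set α, DecompSet M B (ActInt M B) F' → F' = F := by
  have hfix := (decompStep M B).isFixedPt_lfp
  exact ⟨_, decompSet_of_isFixedPt hB hfix, isCyclicFlat_of_isFixedPt hB hfix,
    fun _ hF' ↦ isFixedPt_decompStep_unique (hF'.isFixedPt hB) hfix⟩

end ActiveBij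
end

section
/- Let M be a matroid on a finite ground set E and let F ⊆ G ⊆ E. Then the dual of the minor M(G)/F equals the minor M*(E \ F)/(E \ G) of the dual matroid M*. Consequently, if ∅ = F'_ε ⊂ … ⊂ F'_0 = F_c = F_0 ⊂ … ⊂ F_ι = E is a connected filtration of M (with E linearly ordered), then ∅ = E \ F_ι ⊂ … ⊂ E \ F_0 = E \ F_c = E \ F'_0 ⊂ … ⊂ E \ F'_ε = E is a connected filtration of M* with cyclic flat E \ F_c, and the minors it induces are the duals of the minors induced by the original filtration. Moreover, ∅ = F'_ε ⊂ … ⊂ F'_0 = F_c is a connected filtration of M(F_c) with cyclic flat F_c, and ∅ = F_0 \ F_c ⊂ … ⊂ F_ι \ F_c = E \ F_c is a connected filtration of M/F_c with cyclic flat ∅. -/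
/-! Complementation in `E` exchanges restriction and contraction, so
`(M(G)/F)* = M*(E \ F)/(E \ G)` follows by commuting a contraction with a disjoint deletion.
Hence the minors of the complemented filtration are the duals of the original minors, and it
remains that duality preserves connectedness and exchanges single loops with single coloops.
The two halves of a filtration around `F_c` induce in `M(F_c)` and in `M/F_c` the same minors
as in `M`. -/

open Matroid Set

namespace ActiveBij

variable {α : Type*}

lemma sdiff_ssubset_sdiff_right {E A B : Set α} (hBE : B ⊆ E) (hAB : A ⊂ B) :
    E \ B ⊂ E \ A := by
  refine (sdiff_subset_sdiff_right hAB.subset).ssubset_of_ne fun h => hAB.ne ?_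
  rw [← sdiff_sdiff_cancel_left (hAB.subset.trans hBE), ← h, sdiff_sdiff_cancel_left hBE]

section Minor

variable {M : Matroid α} {F G R F₀ : Set α}

lemma minor_dual (hFG : F ⊆ G) (hG : G ⊆ M.E) :
    (minor M G F)✶ = minor M✶ (M.E \ F) (M.E \ G) := by
  change ((M ↾ G) ／ F)✶ = (M✶ ↾ (M.E \ F)) ／ (M.E \ G)
  rw [dual_contract, ← sdiff_sdiff_cancel_left hG, ← delete_eq_restrict, dual_delete,
    contract_delete_comm _ (disjoint_sdiff_left.mono_right hFG), delete_eq_restrict,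
    dual_ground, sdiff_sdiff_cancel_left hG]

lemma minor_restrict (hGR : G ⊆ R) : minor (M ↾ R) G F = minor M G F := by
  rw [minor, minor, restrict_restrict_eq M hGR]

lemma minor_con (hF₀F : F₀ ⊆ F) (hFG : F ⊆ G) :
    minor (con M F₀) (G \ F₀) (F \ F₀) = minor M G F := by
  change ((M ／ F₀) ↾ (G \ F₀)) ／ (F \ F₀) = (M ↾ G) ／ F
  rw [← restrict_contract_eq_contract_restrict _ (hF₀F.trans hFG), contract_contract,
    union_sdiff_cancel hF₀F]

end Minor

section Duality

variable {M N : Matroid α} {C : Set α} {x y : α}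

/-- Extend `C \ {y}` to a base `B`: then `C` is the fundamental circuit of `y`, and the
fundamental cocircuit of `x` contains `y`. -/
lemma _root_.Matroid.IsCircuit.exists_isCocircuit_mem_mem (hC : M.IsCircuit C) (hx : x ∈ C)
    (hy : y ∈ C) (hxy : x ≠ y) : ∃ K, M.IsCocircuit K ∧ x ∈ K ∧ y ∈ K := by
  obtain ⟨B, hB, hCB⟩ := (hC.sdiff_singleton_indep hy).exists_isBase_superset
  have hxB : x ∈ B := hCB ⟨hx, hxy⟩
  have hyB : y ∉ B := fun hyB =>
    hC.not_indep (hB.indep.subset fun z hz => (eq_or_ne z y).elim (· ▸ hyB) (hCB ⟨hz, ·⟩))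
  have hCfund : C = M.fundCircuit y B :=
    hC.eq_fundCircuit_of_subset hB.indep fun z hz =>
      (eq_or_ne z y).elim (Or.inl ·) (fun hzy => Or.inr (hCB ⟨hz, hzy⟩))
  refine ⟨M.fundCocircuit x B, fundCocircuit_isCocircuit hxB hB, M.mem_fundCocircuit x B, ?_⟩
  rw [hB.mem_fundCocircuit_iff_mem_fundCircuit, ← hCfund]
  exact hx

lemma Conn.dual (h : Conn M) : Conn M✶ := by
  refine ⟨h.1, fun x y hx hy => ?_⟩
  obtain rfl | hxy := eq_or_ne x y
  · exact Or.inl rfl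
  obtain h' | ⟨C, hC, hxC, hyC⟩ := h.2 hx hy
  · exact Or.inl h'
  exact Or.inr (IsCircuit.exists_isCocircuit_mem_mem hC hxC hyC hxy)

lemma isLoopMatroid_iff_exists_eq_loopyOn : IsLoopMatroid N ↔ ∃ e, N = loopyOn {e} := by
  refine exists_congr fun e =>
    ⟨fun ⟨hE, hdep⟩ => eq_loopyOn_iff.2 ⟨hE, fun X hX hXi => ?_⟩, ?_⟩
  · obtain rfl | rfl := subset_singleton_iff_eq.1 (hE ▸ hX)
    · rfl
    · exact absurd hXi hdep.not_indep
  · rintro rfl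
    exact ⟨rfl, singleton_dep.2 (loopyOn_isLoop_iff.2 rfl)⟩

lemma isColoopMatroid_iff_exists_eq_freeOn : IsColoopMatroid N ↔ ∃ e, N = freeOn {e} := by
  simp only [IsColoopMatroid, eq_freeOn_iff]

lemma isLoopMatroid_dual_iff : IsLoopMatroid N✶ ↔ IsColoopMatroid N := by
  simp only [isLoopMatroid_iff_exists_eq_loopyOn, isColoopMatroid_iff_exists_eq_freeOn,
    ← freeOn_dual_eq, dual_inj]

lemma isColoopMatroid_dual_iff : IsColoopMatroid N✶ ↔ IsLoopMatroid N := by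
  rw [← isLoopMatroid_dual_iff, dual_dual]

end Duality

section Filtration

variable [LinearOrder α] {M : Matroid α} {f : Filtration α}

namespace IsFiltration

lemma monotone_F (hf : IsFiltration M f) : Monotone f.F :=
  Fin.monotone_iff_le_succ.2 fun k => (hf.2.2.2.1 k).subset

lemma antitone_F' (hf : IsFiltration M f) : Antitone f.F' :=
  Fin.antitone_iff_succ_le.2 fun k => (hf.2.2.2.2.1 k).subset

lemma F_subset_ground (hf : IsFiltration M f) (i : Fin (f.ι + 1)) : f.F i ⊆ M.E :=
  hf.2.2.1 ▸ hf.monotone_F (Fin.le_last i)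

lemma F'_subset_F_zero (hf : IsFiltration M f) (i : Fin (f.ε + 1)) : f.F' i ⊆ f.F 0 :=
  hf.2.1 ▸ hf.antitone_F' (Fin.zero_le i)

lemma F'_subset_ground (hf : IsFiltration M f) (i : Fin (f.ε + 1)) : f.F' i ⊆ M.E :=
  (hf.F'_subset_F_zero i).trans (hf.F_subset_ground 0)

lemma intMinor_dualFil (hf : IsFiltration M f) (k : Fin f.ε) :
    intMinor M✶ (dualFil M f) k = (extMinor M f k)✶ :=
  (minor_dual (hf.antitone_F' k.castSucc_le_succ) (hf.F'_subset_ground _)).symm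

lemma extMinor_dualFil (hf : IsFiltration M f) (k : Fin f.ι) :
    extMinor M✶ (dualFil M f) k = (intMinor M f k)✶ :=
  (minor_dual (hf.monotone_F k.castSucc_le_succ) (hf.F_subset_ground _)).symm

lemma dualFil_F_zero (hf : IsFiltration M f) : (dualFil M f).F 0 = M.E \ f.F 0 :=
  congrArg (M.E \ ·) hf.2.1

protected lemma dualFil (hf : IsFiltration M f) : IsFiltration M✶ (dualFil M f) := by
  have ⟨hlast', h00, hlast, hF, hF', hminF, hminF'⟩ := hf
  refine ⟨(congrArg (M.E \ ·) hlast).trans Set.sdiff_self, congrArg (M.E \ ·) h00.symm,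
    (congrArg (M.E \ ·) hlast').trans sdiff_empty,
    fun k => sdiff_ssubset_sdiff_right (hf.F'_subset_ground _) (hF' k),
    fun k => sdiff_ssubset_sdiff_right (hf.F_subset_ground _) (hF k),
    fun j k hjk a b => ?_, fun j k hjk a b => ?_⟩
  · dsimp only [dualFil]
    rw [sdiff_sdiff_sdiff_cancel_left (hf.F'_subset_ground _),
      sdiff_sdiff_sdiff_cancel_left (hf.F'_subset_ground _)]
    exact hminF' j k hjk a b
  · dsimp only [dualFil]
    rw [sdiff_sdiff_sdiff_cancel_left (hf.F_subset_ground _),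
      sdiff_sdiff_sdiff_cancel_left (hf.F_subset_ground _)]
    exact hminF j k hjk a b

end IsFiltration

protected lemma IsConnFiltration.dualFil (hf : IsConnFiltration M f) :
    IsConnFiltration M✶ (dualFil M f) := by
  obtain ⟨hfil, hint, hext⟩ := hf
  refine ⟨hfil.dualFil, fun k => ?_, fun k => ?_⟩
  · rw [hfil.intMinor_dualFil k, isLoopMatroid_dual_iff]
    exact ⟨(hext k).1.dual, (hext k).2⟩
  · rw [hfil.extMinor_dualFil k, isColoopMatroid_dual_iff]
    exact ⟨(hint k).1.dual, (hint k).2⟩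

def Filtration.belowCyclicFlat (f : Filtration α) : Filtration α :=
  ⟨0, f.ε, fun _ => f.F 0, f.F'⟩

def Filtration.aboveCyclicFlat (f : Filtration α) : Filtration α :=
  ⟨f.ι, 0, fun k => f.F k \ f.F 0, fun _ => ∅⟩

lemma IsConnFiltration.belowCyclicFlat (hf : IsConnFiltration M f) :
    IsConnFiltration (M ↾ f.F 0) f.belowCyclicFlat := by
  obtain ⟨hfil, -, hext⟩ := hf
  have ⟨hlast', h00, _, _, hF', _, hminF'⟩ := hfil
  refine ⟨⟨hlast', h00, rfl, fun k => k.elim0, hF', fun k => k.elim0, hminF'⟩,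
    fun k => k.elim0, fun (k : Fin f.ε) => ?_⟩
  dsimp only [extMinor, Filtration.belowCyclicFlat]
  rw [minor_restrict (hfil.F'_subset_F_zero _)]
  exact hext k

lemma IsConnFiltration.aboveCyclicFlat (hf : IsConnFiltration M f) :
    IsConnFiltration (con M (f.F 0)) f.aboveCyclicFlat := by
  obtain ⟨hfil, hint, -⟩ := hf
  have ⟨_, _, hlast, hF, _, hminF, _⟩ := hfil
  have hF₀ (k : Fin (f.ι + 1)) : f.F 0 ⊆ f.F k := hfil.monotone_F (Fin.zero_le k)
  have hstep (k : Fin f.ι) : (f.F k.succ \ f.F 0) \ (f.F k.castSucc \ f.F 0) =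
      f.F k.succ \ f.F k.castSucc :=
    sdiff_sdiff_sdiff_cancel_right (hF₀ _)
  refine ⟨⟨rfl, Set.sdiff_self.symm, congrArg (· \ f.F 0) hlast,
      fun k => sdiff_lt_sdiff_right (hF k) (hF₀ _), fun k => k.elim0, ?_, fun k => k.elim0⟩,
    fun (k : Fin f.ι) => ?_, fun k => k.elim0⟩
  · intro j k hjk a b
    dsimp only [Filtration.aboveCyclicFlat]
    rw [hstep j, hstep k]
    exact hminF j k hjk a b
  · dsimp only [intMinor, Filtration.aboveCyclicFlat]
    rw [minor_con (hF₀ _) (hfil.monotone_F k.castSucc_le_succ)]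
    exact hint k

end Filtration

end ActiveBij

namespace ActiveBij

theorem stmt14_general {α : Type*} [LinearOrder α] (M : Matroid α) :
    (∀ F G : Set α, F ⊆ G → G ⊆ M.E →
      (minor M G F)✶ = minor M✶ (M.E \ F) (M.E \ G)) ∧
    (∀ f : Filtration α, IsConnFiltration M f →
      IsConnFiltration M✶ (dualFil M f) ∧
      (dualFil M f).F 0 = M.E \ f.F 0 ∧
      (∀ k : Fin f.ε, intMinor M✶ (dualFil M f) k = (extMinor M f k)✶) ∧
      (∀ k : Fin f.ι, extMinor M✶ (dualFil M f) k = (intMinor M f k)✶) ∧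
      IsConnFiltration (M ↾ f.F 0)
        (⟨0, f.ε, fun _ => f.F 0, f.F'⟩ : Filtration α) ∧
      (⟨0, f.ε, fun _ => f.F 0, f.F'⟩ : Filtration α).F 0 = f.F 0 ∧
      IsConnFiltration (con M (f.F 0))
        (⟨f.ι, 0, fun k => f.F k \ f.F 0, fun _ => ∅⟩ : Filtration α) ∧
      (⟨f.ι, 0, fun k => f.F k \ f.F 0, fun _ => ∅⟩ : Filtration α).F 0 = (∅ : Set α)) := by
  refine ⟨fun F G hFG hG => minor_dual hFG hG, fun f hf => ?_⟩
  exact ⟨hf.dualFil, hf.1.dualFil_F_zero, hf.1.intMinor_dualFil, hf.1.extMinor_dualFil,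
    hf.belowCyclicFlat, rfl, hf.aboveCyclicFlat, Set.sdiff_self⟩

/-- Duality of minors and of connected filtrations, and the restriction/contraction of a
connected filtration to the two sides of its cyclic flat. -/
theorem stmt14 {α : Type*} [LinearOrder α] (M : Matroid α) [M.Finite] :
    (∀ F G : Set α, F ⊆ G → G ⊆ M.E →
      (minor M G F)✶ = minor M✶ (M.E \ F) (M.E \ G)) ∧
    (∀ f : Filtration α, IsConnFiltration M f →
      IsConnFiltration M✶ (dualFil M f) ∧
      (dualFil M f).F 0 = M.E \ f.F 0 ∧
      (∀ k : Fin f.ε, intMinor M✶ (dualFil M f) k = (extMinor M f k)✶) ∧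
      (∀ k : Fin f.ι, extMinor M✶ (dualFil M f) k = (intMinor M f k)✶) ∧
      IsConnFiltration (M ↾ f.F 0)
        (⟨0, f.ε, fun _ => f.F 0, f.F'⟩ : Filtration α) ∧
      (⟨0, f.ε, fun _ => f.F 0, f.F'⟩ : Filtration α).F 0 = f.F 0 ∧
      IsConnFiltration (con M (f.F 0))
        (⟨f.ι, 0, fun k => f.F k \ f.F 0, fun _ => ∅⟩ : Filtration α) ∧
      (⟨f.ι, 0, fun k => f.F k \ f.F 0, fun _ => ∅⟩ : Filtration α).F 0 = (∅ : Set α)) :=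
  stmt14_general M

end ActiveBij
end
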